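/- Let X be a Hilbert space, f: X → ℝ convex and continuous, and suppose x̄ ∈ X with f(x̄) > 0 and ∂f bounded near x̄. Consider any sequence {x_i} such that x_{i+1} lies in the intersection F_i of halfspaces including the halfspace H_i = {x : f(x_i) + ⟨y_i, x - x_i⟩ ≤ 0} with y_i ∈ ∂f(x_i), F_{i+1} ⊆ F_i for all i, and x_j ∈ F_i for all j > i. Then x̄ cannot be a strong cluster point of {x_i}. -/

import Mathlib

/-! Near `x̄` the values `f (xᵢ)` stay above `f x̄ / 2 > 0` and the subgradients `yᵢ` are bounded
by `M`, so the cut `f (xᵢ) + ⟪yᵢ, z - xᵢ⟫ ≤ 0`, which every later iterate satisfies, keeps all of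
them at distance at least `f x̄ / (2M)` from `xᵢ`. Two iterates close to `x̄` cannot be that far
apart, so `x̄` is not a cluster point. -/

open RealInnerProductSpace Filter

/-- The convex subdifferential of `f : X → ℝ` at `x`. -/
def subdiff {X : Type*} [NormedAddCommGroup X] [InnerProductSpace ℝ X]
    (f : X → ℝ) (x : X) : Set X :=
  {y | ∀ z, f x + ⟪y, z - x⟫ ≤ f z}

theorem le_mul_norm_of_add_inner_nonpos {X : Type*} [NormedAddCommGroup X]
    [InnerProductSpace ℝ X] {a M : ℝ} {y v : X} (hcut : a + ⟪y, v⟫ ≤ 0) (hy : ‖y‖ ≤ M) :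
    a ≤ M * ‖v‖ :=
  calc a ≤ -⟪y, v⟫ := by linarith
    _ ≤ ‖y‖ * ‖v‖ := (neg_le_abs _).trans (abs_real_inner_le_norm y v)
    _ ≤ M * ‖v‖ := mul_le_mul_of_nonneg_right hy (norm_nonneg v)

theorem not_mapClusterPt_of_forall_lt_le_dist {E : Type*} [PseudoMetricSpace E] {u : ℕ → E}
    {a : E} {U : Set E} (hU : U ∈ nhds a) {c : ℝ} (hc : 0 < c)
    (hsep : ∀ i j, i < j → u i ∈ U → c ≤ dist (u j) (u i)) :
    ¬ MapClusterPt a atTop u := by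
  intro hclus
  have hfreq : ∃ᶠ n in atTop, u n ∈ U ∩ Metric.ball a (c / 2) :=
    mapClusterPt_iff_frequently.mp hclus _ (inter_mem hU (Metric.ball_mem_nhds a (half_pos hc)))
  obtain ⟨i, hiU, hia⟩ := hfreq.exists
  obtain ⟨j, ⟨-, hja⟩, hij⟩ := (hfreq.and_eventually (eventually_gt_atTop i)).exists
  have := dist_triangle_right (u j) (u i) a
  linarith [hsep i j hij hiU, Metric.mem_ball.mp hia, Metric.mem_ball.mp hja]

theorem no_strong_cluster_point_CIP_general
    {X : Type*} [NormedAddCommGroup X] [InnerProductSpace ℝ X]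
    (f : X → ℝ) (hcont : Continuous f)
    (xbar : X) (hfxbar : 0 < f xbar)
    (hbdd : ∃ r > (0:ℝ), ∃ M : ℝ, ∀ z ∈ Metric.ball xbar r, ∀ y ∈ subdiff f z, ‖y‖ ≤ M)
    (x y : ℕ → X) (hy : ∀ i, y i ∈ subdiff f (x i))
    (F : ℕ → Set X)
    (hFH : ∀ i, F i ⊆ {z | f (x i) + ⟪y i, z - x i⟫ ≤ 0})
    (hxF : ∀ i j, i < j → x j ∈ F i) :
    ¬ MapClusterPt xbar atTop x := by
  obtain ⟨r, hr, M, hM⟩ := hbdd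
  have hM' : 0 < max M 1 := lt_max_of_lt_right one_pos
  have hU : {z | f xbar / 2 < f z} ∩ Metric.ball xbar r ∈ nhds xbar :=
    inter_mem (hcont.continuousAt.eventually_const_lt (half_lt_self hfxbar))
      (Metric.ball_mem_nhds xbar hr)
  refine not_mapClusterPt_of_forall_lt_le_dist hU (div_pos (half_pos hfxbar) hM') ?_
  rintro i j hij ⟨hfi, hri⟩
  have hsep : f (x i) ≤ max M 1 * ‖x j - x i‖ :=
    le_mul_norm_of_add_inner_nonpos (hFH i (hxF i j hij))
      ((hM _ hri _ (hy i)).trans (le_max_left M 1))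
  rw [dist_eq_norm, div_le_iff₀ hM']
  linarith [hfi.out]

/-- In the infeasible case, a point with `f(x̄) > 0` cannot be a strong cluster
point of iterates confined to nested subgradient-cut polyhedra. -/
theorem no_strong_cluster_point_CIP
    {X : Type*} [NormedAddCommGroup X] [InnerProductSpace ℝ X] [CompleteSpace X]
    (f : X → ℝ) (hconv : ConvexOn ℝ Set.univ f) (hcont : Continuous f)
    (xbar : X) (hfxbar : 0 < f xbar)
    (hbdd : ∃ r > (0:ℝ), ∃ M : ℝ, ∀ z ∈ Metric.ball xbar r, ∀ y ∈ subdiff f z, ‖y‖ ≤ M)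
    (x y : ℕ → X) (hy : ∀ i, y i ∈ subdiff f (x i))
    (F : ℕ → Set X)
    (hFH : ∀ i, F i ⊆ {z | f (x i) + ⟪y i, z - x i⟫ ≤ 0})
    (hFnest : ∀ i, F (i + 1) ⊆ F i)
    (hxF : ∀ i j, i < j → x j ∈ F i) :
    ¬ MapClusterPt xbar atTop x :=
  no_strong_cluster_point_CIP_general f hcont xbar hfxbar hbdd x y hy F hFH hxF
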